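/- Let n ≥ 1, let A = ℂ[x₁,…,xₙ] be the polynomial ring equipped with a ℤ-grading making it a graded ℂ-algebra, let m be a nonzero integer, and let f ∈ A be homogeneous of degree m. Suppose a, b ≥ 1 are integers satisfying a + b ≡ 0 (mod m) and a·b ≡ 1 (mod m²). Then the ℂ-algebras R_{f,1} ⊗_ℂ R_{f,1} and R_{f,a} ⊗_ℂ R_{f,a} are isomorphic. -/

import Mathlib

open LaurentPolynomial TensorProduct

/-- `R_{f,j} = A[T,T⁻¹]/(T^j·f − 1)` for `A = ℂ[x₁,…,xₙ]`, the coordinate ring of the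
hypersurface `X̃_{f,j}` defined by `t^j f = 1`. -/
noncomputable def hypersurfaceRing (n : ℕ) (f : MvPolynomial (Fin n) ℂ) (j : ℤ) :
    Type :=
  LaurentPolynomial (MvPolynomial (Fin n) ℂ) ⧸ Ideal.span {T j * C f - 1}

noncomputable instance (n : ℕ) (f : MvPolynomial (Fin n) ℂ) (j : ℤ) :
    CommRing (hypersurfaceRing n f j) :=
  inferInstanceAs (CommRing (LaurentPolynomial (MvPolynomial (Fin n) ℂ) ⧸
    Ideal.span {T j * C f - 1}))

noncomputable instance (n : ℕ) (f : MvPolynomial (Fin n) ℂ) (j : ℤ) :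
    Algebra ℂ (hypersurfaceRing n f j) :=
  inferInstanceAs (Algebra ℂ (LaurentPolynomial (MvPolynomial (Fin n) ℂ) ⧸
    Ideal.span {T j * C f - 1}))

/-!
A `ℂ`-algebra map out of `R_{f,j}` is a pair `(ι, z)` of an algebra map `ι` on `A` and a
unit `z` with `ι f * z ^ j = 1`. Because `f` is homogeneous of degree `m`, twisting `ι` through
the grading by a unit `w` (`g ↦ ι g * w ^ deg g`) multiplies `ι f` by `w ^ m`. On
`R_{f,j} ⊗ R_{f,k}`, with torus coordinates `t₁, t₂`, twist the `i`-th factor by the monomial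
`t ^ P i` and send `tᵢ` to `t ^ N i`: this is well defined as soon as
`m • P + diag(j, k) * N = diag(j', k')`, and for `N ∈ GL₂(ℤ)` the data `(N⁻¹, -P N⁻¹)`
defines the inverse map. With `a + b = m c` and `a b - 1 = m² d`, the matrix
`N = !![-b, m; -m d, a]` has determinant `-1` and is congruent to `diag(a, a)` modulo `m`, which
identifies the square of `R_{f,1}` with that of `R_{f,a}`.
-/

section ZPowProd

variable {ι G : Type*} [Fintype ι] [CommGroup G]

def zpowProd (u : ι → G) (v : ι → ℤ) : G := ∏ l, u l ^ v l

lemma zpowProd_add (u : ι → G) (v v' : ι → ℤ) :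
    zpowProd u (v + v') = zpowProd u v * zpowProd u v' := by
  simp only [zpowProd, Pi.add_apply, zpow_add, Finset.prod_mul_distrib]

lemma zpowProd_smul (u : ι → G) (c : ℤ) (v : ι → ℤ) :
    zpowProd u (c • v) = zpowProd u v ^ c := by
  simp only [zpowProd, Pi.smul_apply, smul_eq_mul, ← Finset.prod_zpow, mul_comm c, zpow_mul]

lemma zpowProd_zero (u : ι → G) : zpowProd u 0 = 1 := by
  simp [zpowProd]

lemma zpowProd_single [DecidableEq ι] (u : ι → G) (i : ι) (c : ℤ) :
    zpowProd u (Pi.single i c) = u i ^ c := by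
  rw [zpowProd, Finset.prod_eq_single i (fun l _ hl => by rw [Pi.single_eq_of_ne hl, zpow_zero])
    (by simp), Pi.single_eq_same]

lemma zpow_sum_eq_prod (x : G) (f : ι → ℤ) : x ^ (∑ i, f i) = ∏ i, x ^ f i := by
  simpa [← ofAdd_sum] using
    map_prod (zpowersHom G x) (fun i => Multiplicative.ofAdd (f i)) Finset.univ

open Matrix in
lemma zpowProd_vecMul (u : ι → G) (v : ι → ℤ) (N : Matrix ι ι ℤ) :
    zpowProd u (v ᵥ* N) = zpowProd (fun i => zpowProd u (N i)) v := by
  simp only [zpowProd, vecMul, dotProduct, zpow_sum_eq_prod, ← Finset.prod_zpow,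
    ← _root_.zpow_mul]
  rw [Finset.prod_comm]
  simp only [mul_comm]

lemma map_zpowProd {H : Type*} [CommGroup H] (φ : G →* H) (u : ι → G) (v : ι → ℤ) :
    φ (zpowProd u v) = zpowProd (φ ∘ u) v := by
  simp [zpowProd]

end ZPowProd

section GradedTwist

variable {R A B : Type*} [CommRing R] [CommRing A] [Algebra R A] [CommRing B] [Algebra R B]
  (𝒜 : ℤ → Submodule R A) [GradedAlgebra 𝒜]

lemma algHom_ext_of_homogeneous {φ ψ : A →ₐ[R] B} (h : ∀ e, ∀ g ∈ 𝒜 e, φ g = ψ g) :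
    φ = ψ :=
  AlgHom.toLinearMap_injective <|
    DirectSum.decompose_lhom_ext 𝒜 fun e => LinearMap.ext fun g => h e g g.2

noncomputable def gradedTwist (ι : A →ₐ[R] B) (w : Bˣ) : A →ₐ[R] B :=
  (DirectSum.toAlgebra R (fun e => 𝒜 e)
    (fun e => ((w ^ e : Bˣ) : B) • (ι.toLinearMap ∘ₗ (𝒜 e).subtype))
    (by simp [SetLike.coe_gOne])
    (fun {i j} ai aj => by
      simp only [LinearMap.smul_apply, LinearMap.coe_comp, Function.comp_apply,
        Submodule.coe_subtype, SetLike.coe_gMul, AlgHom.toLinearMap_apply, map_mul, smul_eq_mul,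
        zpow_add, Units.val_mul]
      ring)).comp (DirectSum.decomposeAlgEquiv 𝒜).toAlgHom

variable {𝒜}

lemma gradedTwist_of_mem (ι : A →ₐ[R] B) (w : Bˣ) {e : ℤ} {g : A} (hg : g ∈ 𝒜 e) :
    gradedTwist 𝒜 ι w g = ι g * ((w ^ e : Bˣ) : B) := by
  rw [gradedTwist, AlgHom.comp_apply]
  change DirectSum.toAlgebra R (fun i => 𝒜 i) _ _ _ (DirectSum.decompose 𝒜 g) = _
  rw [DirectSum.decompose_of_mem 𝒜 hg, DirectSum.toAlgebra_apply]
  exact (DirectSum.toSemiring_of _ _ _ _ _).trans (by simp [mul_comm])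

variable (𝒜)

lemma gradedTwist_one (ι : A →ₐ[R] B) : gradedTwist 𝒜 ι 1 = ι :=
  algHom_ext_of_homogeneous 𝒜 fun _ _ hg => by simp [gradedTwist_of_mem ι 1 hg]

lemma gradedTwist_gradedTwist (ι : A →ₐ[R] B) (w w' : Bˣ) :
    gradedTwist 𝒜 (gradedTwist 𝒜 ι w) w' = gradedTwist 𝒜 ι (w * w') :=
  algHom_ext_of_homogeneous 𝒜 fun _ _ hg => by
    simp [gradedTwist_of_mem _ _ hg, mul_zpow, mul_assoc]

lemma comp_gradedTwist {C : Type*} [CommRing C] [Algebra R C] (φ : B →ₐ[R] C)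
    (ι : A →ₐ[R] B) (w : Bˣ) :
    φ.comp (gradedTwist 𝒜 ι w) = gradedTwist 𝒜 (φ.comp ι) (Units.map φ w) :=
  algHom_ext_of_homogeneous 𝒜 fun _ _ hg => by
    simp [gradedTwist_of_mem _ _ hg, ← map_zpow]

end GradedTwist

namespace LaurentPolynomial

variable {R A B : Type*} [CommSemiring R] [CommSemiring A] [Algebra R A] [CommSemiring B]
  [Algebra R B]

variable (A) in
noncomputable def unitT : A[T;T⁻¹]ˣ :=
  ⟨T 1, T (-1), by rw [← T_add, add_neg_cancel, T_zero],
    by rw [← T_add, neg_add_cancel, T_zero]⟩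

lemma val_unitT_zpow (e : ℤ) : ((unitT A ^ e : A[T;T⁻¹]ˣ) : A[T;T⁻¹]) = T e := by
  induction e using Int.induction_on with
  | zero => simp [T_zero]
  | succ k ih => rw [zpow_add_one, Units.val_mul, ih, unitT, Units.val_mk, ← T_add]
  | pred k ih =>
    rw [zpow_sub_one, Units.val_mul, ih, unitT, Units.inv_mk, Units.val_mk, ← T_add,
      sub_eq_add_neg]

noncomputable def eval₂AlgHom (ι : A →ₐ[R] B) (z : Bˣ) : A[T;T⁻¹] →ₐ[R] B :=
  { eval₂ (ι : A →+* B) z with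
    commutes' := fun r => by simp [LaurentPolynomial.algebraMap_apply] }

@[simp]
lemma eval₂AlgHom_C (ι : A →ₐ[R] B) (z : Bˣ) (a : A) : eval₂AlgHom ι z (C a) = ι a :=
  eval₂_C _ _ a

@[simp]
lemma eval₂AlgHom_T (ι : A →ₐ[R] B) (z : Bˣ) (e : ℤ) :
    eval₂AlgHom ι z (T e) = ↑(z ^ e) :=
  eval₂_T _ _ e

lemma algHom_ext_of_T_one {φ ψ : A[T;T⁻¹] →ₐ[R] B} (hC : ∀ a, φ (C a) = ψ (C a))
    (hT : φ (T 1) = ψ (T 1)) : φ = ψ := by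
  have hunit : Units.map (φ : A[T;T⁻¹] →* B) (unitT A) =
      Units.map (ψ : A[T;T⁻¹] →* B) (unitT A) :=
    Units.ext hT
  refine AlgHom.coe_ringHom_injective (AddMonoidAlgebra.ringHom_ext hC fun e => ?_)
  change φ (T e) = ψ (T e)
  rw [← val_unitT_zpow]
  change (φ : A[T;T⁻¹] →* B) _ = (ψ : A[T;T⁻¹] →* B) _
  rw [← Units.coe_map, ← Units.coe_map, map_zpow, map_zpow, hunit]

end LaurentPolynomial

namespace hypersurfaceRing

open Algebra.TensorProduct

section Universal

variable {n : ℕ} (f : MvPolynomial (Fin n) ℂ) (j : ℤ) {B : Type*} [CommRing B] [Algebra ℂ B]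

noncomputable def mk :
    LaurentPolynomial (MvPolynomial (Fin n) ℂ) →ₐ[ℂ] hypersurfaceRing n f j :=
  Ideal.Quotient.mkₐ ℂ _

noncomputable def coord : MvPolynomial (Fin n) ℂ →ₐ[ℂ] hypersurfaceRing n f j :=
  (mk f j).comp (IsScalarTower.toAlgHom ℂ _ _)

noncomputable def t : (hypersurfaceRing n f j)ˣ :=
  Units.map (mk f j : LaurentPolynomial (MvPolynomial (Fin n) ℂ) →* _) (unitT _)

lemma coord_apply (g : MvPolynomial (Fin n) ℂ) : coord f j g = mk f j (C g) := rfl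

lemma val_t_zpow (e : ℤ) : (↑(t f j ^ e) : hypersurfaceRing n f j) = mk f j (T e) := by
  rw [t, ← map_zpow, Units.coe_map, ← val_unitT_zpow]
  rfl

lemma coord_mul_t_zpow_eq_one : coord f j f * ↑(t f j ^ j) = 1 := by
  rw [val_t_zpow, coord_apply, ← map_mul, mul_comm]
  exact (Ideal.Quotient.eq (x := T j * C f) (y := 1)).mpr (Ideal.subset_span rfl)

variable {f j}

noncomputable def lift (ι : MvPolynomial (Fin n) ℂ →ₐ[ℂ] B) (z : Bˣ)
    (h : ι f * ↑(z ^ j) = 1) : hypersurfaceRing n f j →ₐ[ℂ] B :=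
  Ideal.Quotient.liftₐ _ (eval₂AlgHom ι z) fun _ hx => by
    refine (Ideal.span_singleton_le_iff_mem (RingHom.ker (eval₂AlgHom ι z))).mpr ?_ hx
    rw [RingHom.mem_ker, map_sub, map_mul, map_one, eval₂AlgHom_T, eval₂AlgHom_C, mul_comm, h,
      sub_self]

lemma lift_comp_coord (ι : MvPolynomial (Fin n) ℂ →ₐ[ℂ] B) (z : Bˣ) (h) :
    (lift ι z h).comp (coord f j) = ι :=
  AlgHom.ext fun g => eval₂AlgHom_C ι z g

lemma lift_t (ι : MvPolynomial (Fin n) ℂ →ₐ[ℂ] B) (z : Bˣ) (h) :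
    lift ι z h (t f j : hypersurfaceRing n f j) = z :=
  (eval₂AlgHom_T ι z 1).trans (by rw [zpow_one])

lemma algHom_ext {φ ψ : hypersurfaceRing n f j →ₐ[ℂ] B}
    (hcoord : φ.comp (coord f j) = ψ.comp (coord f j))
    (ht : φ (t f j : hypersurfaceRing n f j) = ψ (t f j : hypersurfaceRing n f j)) : φ = ψ :=
  Ideal.Quotient.algHom_ext ℂ <| algHom_ext_of_T_one (fun a => congr($hcoord a)) ht

end Universal

section TensorSquare

variable {n : ℕ} (f : MvPolynomial (Fin n) ℂ) (j k : ℤ) {B : Type*} [CommRing B]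
  [Algebra ℂ B]

noncomputable def tensorCoord : Fin 2 →
    (MvPolynomial (Fin n) ℂ →ₐ[ℂ] hypersurfaceRing n f j ⊗[ℂ] hypersurfaceRing n f k) :=
  ![includeLeft.comp (coord f j), includeRight.comp (coord f k)]

noncomputable def tensorT : Fin 2 → (hypersurfaceRing n f j ⊗[ℂ] hypersurfaceRing n f k)ˣ :=
  ![Units.map
      (includeLeft : _ →ₐ[ℂ] hypersurfaceRing n f j ⊗[ℂ] hypersurfaceRing n f k) (t f j),
    Units.map
      (includeRight : _ →ₐ[ℂ] hypersurfaceRing n f j ⊗[ℂ] hypersurfaceRing n f k) (t f k)]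

lemma tensorCoord_mul_tensorT_zpow_eq_one (i : Fin 2) :
    tensorCoord f j k i f * ↑(tensorT f j k i ^ ![j, k] i) = 1 := by
  fin_cases i <;> simp [tensorCoord, tensorT, ← map_zpow, coord_mul_t_zpow_eq_one, ← one_def]

variable {f j k}

lemma tensor_algHom_ext
    {φ ψ : hypersurfaceRing n f j ⊗[ℂ] hypersurfaceRing n f k →ₐ[ℂ] B}
    (hcoord : ∀ i, φ.comp (tensorCoord f j k i) = ψ.comp (tensorCoord f j k i))
    (ht : ∀ i, φ ↑(tensorT f j k i) = ψ ↑(tensorT f j k i)) : φ = ψ :=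
  ext (algHom_ext (hcoord 0) (ht 0)) (algHom_ext (hcoord 1) (ht 1))

end TensorSquare

section Twist

open Matrix

variable {n : ℕ} {𝒜 : ℤ → Submodule ℂ (MvPolynomial (Fin n) ℂ)} [GradedAlgebra 𝒜]
  {f : MvPolynomial (Fin n) ℂ} {m : ℤ} {j k j' k' : ℤ}

lemma gradedTwist_tensorCoord_mul_zpow_eq_one (hf : f ∈ 𝒜 m) (N P : Matrix (Fin 2) (Fin 2) ℤ)
    (h : m • P + diagonal ![j, k] * N = diagonal ![j', k']) (i : Fin 2) :
    gradedTwist 𝒜 (tensorCoord f j' k' i) (zpowProd (tensorT f j' k') (P i)) f *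
      ↑(zpowProd (tensorT f j' k') (N i) ^ ![j, k] i) = 1 := by
  have hrow : m • P i + ![j, k] i • N i = Pi.single i (![j', k'] i) := by
    ext l
    have := congr_fun (congr_fun h i) l
    simp only [Matrix.add_apply, Matrix.smul_apply, diagonal_mul, diagonal_apply] at this
    simpa only [Pi.add_apply, Pi.smul_apply, smul_eq_mul, Pi.single_apply, eq_comm] using this
  rw [gradedTwist_of_mem _ _ hf, mul_assoc, ← Units.val_mul, ← zpowProd_smul, ← zpowProd_smul,
    ← zpowProd_add, hrow, zpowProd_single]
  exact tensorCoord_mul_tensorT_zpow_eq_one f j' k' i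

noncomputable def tensorTwistHom (hf : f ∈ 𝒜 m) (N P : Matrix (Fin 2) (Fin 2) ℤ)
    (h : m • P + diagonal ![j, k] * N = diagonal ![j', k']) :
    hypersurfaceRing n f j ⊗[ℂ] hypersurfaceRing n f k →ₐ[ℂ]
      hypersurfaceRing n f j' ⊗[ℂ] hypersurfaceRing n f k' :=
  Algebra.TensorProduct.lift
    (lift (j := j) _ _ (gradedTwist_tensorCoord_mul_zpow_eq_one hf N P h 0))
    (lift (j := k) _ _ (gradedTwist_tensorCoord_mul_zpow_eq_one hf N P h 1))
    fun _ _ => Commute.all _ _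

lemma tensorTwistHom_comp_tensorCoord (hf : f ∈ 𝒜 m) (N P : Matrix (Fin 2) (Fin 2) ℤ)
    (h : m • P + diagonal ![j, k] * N = diagonal ![j', k']) (i : Fin 2) :
    (tensorTwistHom hf N P h).comp (tensorCoord f j k i) =
      gradedTwist 𝒜 (tensorCoord f j' k' i) (zpowProd (tensorT f j' k') (P i)) := by
  fin_cases i <;> simp [tensorTwistHom, tensorCoord, ← AlgHom.comp_assoc, lift_comp_coord]

lemma tensorTwistHom_tensorT (hf : f ∈ 𝒜 m) (N P : Matrix (Fin 2) (Fin 2) ℤ)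
    (h : m • P + diagonal ![j, k] * N = diagonal ![j', k']) (i : Fin 2) :
    tensorTwistHom hf N P h ↑(tensorT f j k i) = ↑(zpowProd (tensorT f j' k') (N i)) := by
  fin_cases i <;> simp [tensorTwistHom, tensorT, lift_t]

lemma map_tensorTwistHom_zpowProd (hf : f ∈ 𝒜 m) (N P : Matrix (Fin 2) (Fin 2) ℤ)
    (h : m • P + diagonal ![j, k] * N = diagonal ![j', k']) (v : Fin 2 → ℤ) :
    Units.map (tensorTwistHom hf N P h : _ →* _) (zpowProd (tensorT f j k) v) =
      zpowProd (tensorT f j' k') (v ᵥ* N) := by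
  rw [map_zpowProd, zpowProd_vecMul]
  congr 1
  ext i : 1
  exact Units.ext (tensorTwistHom_tensorT hf N P h i)

lemma tensorTwistHom_comp_tensorTwistHom (hf : f ∈ 𝒜 m)
    {N P N' P' : Matrix (Fin 2) (Fin 2) ℤ}
    (h : m • P + diagonal ![j, k] * N = diagonal ![j', k'])
    (h' : m • P' + diagonal ![j', k'] * N' = diagonal ![j, k])
    (hN : N * N' = 1) (hP : P' + P * N' = 0) :
    (tensorTwistHom hf N' P' h').comp (tensorTwistHom hf N P h) = AlgHom.id ℂ _ := by
  refine tensor_algHom_ext (fun i => ?_) (fun i => ?_)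
  · have hrow : P' i + P i ᵥ* N' = 0 := congr_fun hP i
    rw [AlgHom.comp_assoc, tensorTwistHom_comp_tensorCoord, comp_gradedTwist,
      tensorTwistHom_comp_tensorCoord, gradedTwist_gradedTwist, map_tensorTwistHom_zpowProd,
      ← zpowProd_add, hrow, zpowProd_zero, gradedTwist_one, AlgHom.id_comp]
  · have hrow : N i ᵥ* N' = Pi.single i 1 :=
      funext fun _ => (congr_fun (congr_fun hN i) _).trans one_eq_pi_single
    have hT := congr_arg Units.val (map_tensorTwistHom_zpowProd hf N' P' h' (N i))
    rw [Units.coe_map, MonoidHom.coe_coe, hrow, zpowProd_single, zpow_one] at hT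
    rw [AlgHom.comp_apply, tensorTwistHom_tensorT, hT, AlgHom.id_apply]

noncomputable def tensorTwistEquiv (hf : f ∈ 𝒜 m) (N : GL (Fin 2) ℤ)
    (P : Matrix (Fin 2) (Fin 2) ℤ) (h : m • P + diagonal ![j, k] * N = diagonal ![j', k']) :
    hypersurfaceRing n f j ⊗[ℂ] hypersurfaceRing n f k ≃ₐ[ℂ]
      hypersurfaceRing n f j' ⊗[ℂ] hypersurfaceRing n f k' :=
  have h' : m • -(P * (↑N⁻¹ : Matrix (Fin 2) (Fin 2) ℤ)) +
      diagonal ![j', k'] * (↑N⁻¹ : Matrix (Fin 2) (Fin 2) ℤ) = diagonal ![j, k] := by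
    rw [← h, add_mul, Matrix.mul_assoc, N.mul_inv, Matrix.mul_one, smul_neg, Matrix.smul_mul,
      neg_add_cancel_left]
  AlgEquiv.ofAlgHom (tensorTwistHom hf N P h) (tensorTwistHom hf _ _ h')
    (tensorTwistHom_comp_tensorTwistHom hf h' h N.inv_mul (by
      rw [Matrix.neg_mul, Matrix.mul_assoc, N.inv_mul, Matrix.mul_one, add_neg_cancel]))
    (tensorTwistHom_comp_tensorTwistHom hf h h' N.mul_inv (neg_add_cancel _))

end Twist

end hypersurfaceRing

theorem squares_iso_general (n : ℕ)
    (𝒜 : ℤ → Submodule ℂ (MvPolynomial (Fin n) ℂ)) [GradedAlgebra 𝒜]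
    (m : ℤ)
    (f : MvPolynomial (Fin n) ℂ) (hf : f ∈ 𝒜 m)
    (a b : ℤ)
    (hsum : a + b ≡ 0 [ZMOD m]) (hprod : a * b ≡ 1 [ZMOD m ^ 2]) :
    Nonempty ((hypersurfaceRing n f 1 ⊗[ℂ] hypersurfaceRing n f 1) ≃ₐ[ℂ]
      (hypersurfaceRing n f a ⊗[ℂ] hypersurfaceRing n f a)) := by
  obtain ⟨c, hc⟩ : m ∣ a + b := Int.modEq_zero_iff_dvd.mp hsum
  obtain ⟨d, hd⟩ : m ^ 2 ∣ a * b - 1 := hprod.symm.dvd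
  have hdet : IsUnit (!![-b, m; -(m * d), a]).det := by
    rw [Matrix.det_fin_two_of, show -b * a - m * -(m * d) = -1 by linear_combination -hd]
    exact isUnit_one.neg
  have hN := (Matrix.isUnit_iff_isUnit_det _).mpr hdet
  refine ⟨hypersurfaceRing.tensorTwistEquiv hf hN.unit !![c, -1; d, 0] ?_⟩
  rw [hN.unit_spec]
  ext i l
  fin_cases i <;> fin_cases l <;> simp [← hc]

/-- **Corollary (squares).** Let `A = ℂ[x₁,…,xₙ]` with a `ℤ`-grading, `m ≠ 0`, and
`f ∈ A` homogeneous of degree `m`.  If `a, b ≥ 1` satisfy `a + b ≡ 0 (mod m)` and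
`a·b ≡ 1 (mod m²)`, then the squares `X̃_{f,1} × X̃_{f,1}` and `X̃_{f,a} × X̃_{f,a}` are
isomorphic, i.e. `R_{f,1} ⊗_ℂ R_{f,1} ≅ R_{f,a} ⊗_ℂ R_{f,a}` as `ℂ`-algebras. -/
theorem squares_iso (n : ℕ) (hn : 1 ≤ n)
    (𝒜 : ℤ → Submodule ℂ (MvPolynomial (Fin n) ℂ)) [GradedAlgebra 𝒜]
    (m : ℤ) (hm : m ≠ 0)
    (f : MvPolynomial (Fin n) ℂ) (hf : f ∈ 𝒜 m)
    (a b : ℤ) (ha : 1 ≤ a) (hb : 1 ≤ b)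
    (hsum : a + b ≡ 0 [ZMOD m]) (hprod : a * b ≡ 1 [ZMOD m ^ 2]) :
    Nonempty ((hypersurfaceRing n f 1 ⊗[ℂ] hypersurfaceRing n f 1) ≃ₐ[ℂ]
      (hypersurfaceRing n f a ⊗[ℂ] hypersurfaceRing n f a)) :=
  squares_iso_general n 𝒜 m f hf a b hsum hprod
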